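/- Let T ∈ ℝ^{4×3} have rows (1,-1,-1), (-1,1,-1), (-1,-1,1), (1,1,1), w = (0,0,0,2)^T, and let v_τ ∈ {0,1}^3 satisfy (v_τ)_1+(v_τ)_2+(v_τ)_3 ≡ 0 (mod 2) with associated coordinate permutation M_{v_τ} (as defined for the four even-parity patterns: identity for (0,0,0); swap pairs (1↔2, 3↔4) for (1,1,0); (1↔3, 2↔4) for (1,0,1); (1↔4, 2↔3) for (0,1,1)). Then for all u ∈ ℝ^3 and e ∈ ℝ^4: ‖T·R_{v_τ}(u) + M_{v_τ}(e) - w‖₂ = ‖T u + e - w‖₂, where (R_{v_τ}(u))_ℓ = u_ℓ if (v_τ)_ℓ = 0 and 1 - u_ℓ if (v_τ)_ℓ = 1. -/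

import Mathlib

/-- The 4×3 parity-polytope matrix `T`. -/
noncomputable def Tmat : Matrix (Fin 4) (Fin 3) ℝ :=
  !![1, -1, -1; -1, 1, -1; -1, -1, 1; 1, 1, 1]

/-- `w = (0,0,0,2)ᵀ`. -/
noncomputable def wvec : Fin 4 → ℝ := ![0, 0, 0, 2]

/-- The coordinate permutation `M_{v_τ}` of `ℝ⁴` associated with each of the four
even-parity binary triples `v_τ`: identity for `(0,0,0)`; `(1↔2, 3↔4)` for
`(1,1,0)`; `(1↔3, 2↔4)` for `(1,0,1)`; `(1↔4, 2↔3)` for `(0,1,1)`. -/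
noncomputable def Mmap (v : Fin 3 → ℝ) (e : Fin 4 → ℝ) : Fin 4 → ℝ :=
  if v = ![1, 1, 0] then ![e 1, e 0, e 3, e 2]
  else if v = ![1, 0, 1] then ![e 2, e 3, e 0, e 1]
  else if v = ![0, 1, 1] then ![e 3, e 2, e 1, e 0]
  else e

/-- The relative-vector map on `ℝ³`: `(R_v u)_ℓ = u_ℓ` if `v_ℓ = 0`,
`1 - u_ℓ` if `v_ℓ = 1`. -/
noncomputable def Rvec (v : Fin 3 → ℝ) (u : Fin 3 → ℝ) : Fin 3 → ℝ :=
  fun ℓ => if v ℓ = 1 then 1 - u ℓ else u ℓ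

/-!
Every even-parity `v` is a symmetry of the parity polytope: the reflection `u ↦ R_v u`
permutes the facets, i.e. `T (R_v u) - w = M_v (T u - w)`. Since `M_v` is a coordinate
permutation it is linear and preserves the Euclidean norm, so
`T (R_v u) + M_v e - w = M_v (T u + e - w)` has the same norm as `T u + e - w`.
-/

open Matrix

theorem exists_perm_Mmap_eq (v : Fin 3 → ℝ) :
    ∃ σ : Equiv.Perm (Fin 4), ∀ e, Mmap v e = e ∘ σ := by
  unfold Mmap
  split_ifs
  · exact ⟨Equiv.swap 0 1 * Equiv.swap 2 3, fun e => by ext j; fin_cases j <;> rfl⟩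
  · exact ⟨Equiv.swap 0 2 * Equiv.swap 1 3, fun e => by ext j; fin_cases j <;> rfl⟩
  · exact ⟨Equiv.swap 0 3 * Equiv.swap 1 2, fun e => by ext j; fin_cases j <;> rfl⟩
  · exact ⟨1, fun e => rfl⟩

theorem Tmat_mulVec_Rvec_sub_wvec {v : Fin 3 → ℝ}
    (hv : v = ![1, 1, 0] ∨ v = ![1, 0, 1] ∨ v = ![0, 1, 1] ∨ v = ![0, 0, 0]) (u : Fin 3 → ℝ) :
    Tmat *ᵥ Rvec v u - wvec = Mmap v (Tmat *ᵥ u - wvec) := by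
  rcases hv with rfl | rfl | rfl | rfl <;> ext j <;> fin_cases j <;>
    simp [Tmat, wvec, Mmap, Rvec, dotProduct, Fin.sum_univ_three] <;> ring

/-- For any even-parity binary triple `v_τ`, all `u ∈ ℝ³` and
`e ∈ ℝ⁴`: `‖T (R_{v_τ} u) + M_{v_τ}(e) - w‖₂ = ‖T u + e - w‖₂`. -/
theorem Mmap_Rvec_norm_invariance (v : Fin 3 → ℝ)
    (hv : v = ![1, 1, 0] ∨ v = ![1, 0, 1] ∨ v = ![0, 1, 1] ∨ v = ![0, 0, 0])
    (u : Fin 3 → ℝ) (e : Fin 4 → ℝ) :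
    Real.sqrt (∑ j, (Tmat.mulVec (Rvec v u) j + Mmap v e j - wvec j) ^ 2)
      = Real.sqrt (∑ j, (Tmat.mulVec u j + e j - wvec j) ^ 2) := by
  obtain ⟨σ, hσ⟩ := exists_perm_Mmap_eq v
  have hsummand (j : Fin 4) :
      (Tmat *ᵥ Rvec v u) j + Mmap v e j - wvec j = (Tmat *ᵥ u) (σ j) + e (σ j) - wvec (σ j) := by
    have hfacet := congrFun (Tmat_mulVec_Rvec_sub_wvec hv u) j
    simp only [hσ, Pi.sub_apply, Function.comp_apply] at hfacet ⊢
    linarith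
  simp_rw [hsummand]
  rw [Equiv.sum_comp σ (fun j => ((Tmat *ᵥ u) j + e j - wvec j) ^ 2)]
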